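/- Assume P, H, V, Θ and Ô are as in the context, assume the generic-points property (for every h ∈ H and v ∈ V with h ∩ v ≠ ∅ there exists a point of h ∩ v belonging to no member of H ∪ V other than h and v), and assume ôrad ≥ 3, where ôrad is the minimum over vertices i of Θ of the maximum over vertices j of Ô(i,j). Then there exists a point p ∈ P such that rld(p,q) ≤ ôrad − 1 for every q ∈ P; consequently rad(P) ≤ ôrad − 1. -/

import Mathlib

/-- A segment with endpoints `p` and `q` is axis-parallel: horizontal (equal
`y`-coordinates) or vertical (equal `x`-coordinates). -/
def AxisParallel (p q : ℝ × ℝ) : Prop := p.2 = q.2 ∨ p.1 = q.1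

/-- `f` describes a rectilinear path from `p` to `q` in `P` with `k ≥ 1` links:
`f 0 = p`, `f k = q`, and each closed segment from `f t` to `f (t+1)` is contained
in `P` and is axis-parallel. -/
def IsRectPath (P : Set (ℝ × ℝ)) (p q : ℝ × ℝ) (k : ℕ) (f : ℕ → ℝ × ℝ) : Prop :=
  1 ≤ k ∧ f 0 = p ∧ f k = q ∧
    ∀ t < k, segment ℝ (f t) (f (t + 1)) ⊆ P ∧ AxisParallel (f t) (f (t + 1))

/-- The rectilinear link distance: the minimum link length of a rectilinear path
from `p` to `q` in `P`. -/
noncomputable def rld (P : Set (ℝ × ℝ)) (p q : ℝ × ℝ) : ℕ :=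
  sInf {k : ℕ | ∃ f : ℕ → ℝ × ℝ, IsRectPath P p q k f}

/-- A box: a closed axis-aligned rectangle `[a,b] × [c,d]` with `a < b` and `c < d`. -/
def IsBox (B : Set (ℝ × ℝ)) : Prop :=
  ∃ a b c d : ℝ, a < b ∧ c < d ∧ B = Set.Icc a b ×ˢ Set.Icc c d

/-- The graph of oriented distances `Θ`: the bipartite graph on the (disjoint) union of
the families `H` and `V`, with an edge between `h ∈ H` and `v ∈ V` exactly when
`h ∩ v ≠ ∅`. -/
def thetaGraph (H V : Set (Set (ℝ × ℝ))) :
    SimpleGraph {B : Set (ℝ × ℝ) // B ∈ H ∪ V} where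
  Adj x y := x ≠ y ∧
    ((x.1 ∈ H ∧ y.1 ∈ V) ∨ (x.1 ∈ V ∧ y.1 ∈ H)) ∧ (x.1 ∩ y.1).Nonempty
  symm := by
    constructor
    rintro x y ⟨hxy, hor, hne⟩
    refine ⟨hxy.symm, ?_, by rwa [Set.inter_comm]⟩
    rcases hor with ⟨h1, h2⟩ | ⟨h1, h2⟩
    · exact Or.inr ⟨h2, h1⟩
    · exact Or.inl ⟨h2, h1⟩
  loopless := by constructor; rintro x ⟨hxx, -⟩; exact hxx rfl

/-- The oriented distance `Ô(i,j)`: the graph distance in `Θ` plus one. -/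
noncomputable def oDist (H V : Set (Set (ℝ × ℝ)))
    (i j : {B : Set (ℝ × ℝ) // B ∈ H ∪ V}) : ℕ :=
  (thetaGraph H V).dist i j + 1

/-- `H` and `V` form a good decomposition of `P`: they are finite families of boxes
contained in `P`; every horizontal (resp. vertical) segment contained in `P` lies in
some member of `H` (resp. `V`); for `h ∈ H` and `v ∈ V` meeting each other, `h ∩ v`
is the product of the `x`-projection of `v` with the `y`-projection of `h`; and the
graph of oriented distances is connected. -/
structure GoodDecomp (P : Set (ℝ × ℝ)) (H V : Set (Set (ℝ × ℝ))) : Prop where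
  finH : H.Finite
  finV : V.Finite
  box : ∀ B ∈ H ∪ V, IsBox B
  sub : ∀ B ∈ H ∪ V, B ⊆ P
  covH : ∀ p q : ℝ × ℝ, p.2 = q.2 → segment ℝ p q ⊆ P → ∃ h ∈ H, segment ℝ p q ⊆ h
  covV : ∀ p q : ℝ × ℝ, p.1 = q.1 → segment ℝ p q ⊆ P → ∃ v ∈ V, segment ℝ p q ⊆ v
  cross : ∀ h ∈ H, ∀ v ∈ V, (h ∩ v).Nonempty →
    h ∩ v = (Prod.fst '' v) ×ˢ (Prod.snd '' h)
  conn : (thetaGraph H V).Connected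

/-- `ôrad`: the minimum over vertices `i` of `Θ` of the maximum over vertices `j` of
`Ô(i,j)`. -/
noncomputable def oRadTheta (H V : Set (Set (ℝ × ℝ))) : ℕ :=
  sInf {m : ℕ | ∃ i : {B : Set (ℝ × ℝ) // B ∈ H ∪ V},
    sSup {n : ℕ | ∃ j : {B : Set (ℝ × ℝ) // B ∈ H ∪ V}, oDist H V i j = n} = m}

/-- `rad(P)`: the infimum over `p ∈ P` of the supremum over `q ∈ P` of `rld(p,q)`. -/
noncomputable def rldRad (P : Set (ℝ × ℝ)) : ℕ :=
  sInf {m : ℕ | ∃ p ∈ P, sSup {n : ℕ | ∃ q ∈ P, rld P p q = n} = m}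

/-!
A walk `B₀, B₁, …, B_L` in `Θ` of length `L ≥ 1` gives, from any point of `B₀` to any point of
`B_L`, a rectilinear path with one link inside each box, turning inside each crossing
`B_t ∩ B_{t+1}`. Take a centre `i` of `Θ`, at distance at most `ôrad - 1` from every box. A point
`q ∈ P` lies in some `h ∈ H` and some `v ∈ V`, which are adjacent; if `Θ` is bipartite their
distances from `i` differ, so one of them is at distance at most `ôrad - 2`, giving a path of
`ôrad - 1` links.

Bipartiteness is where generic points and `ôrad ≥ 3` enter. A box `X ∈ H ∩ V` cannot have
neighbours on both sides, since a generic point of their crossing would lie in `X`. So all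
neighbours of `X` lie, say, in `H`, and then every `v ∈ V` meeting `X` is `X` itself; the
`V`-boxes other than `X` are closed, miss `X` and cover the rest of `P`, so by connectedness each
neighbour of `X` is contained in `X`. Then every vertex of `Θ` is within distance one of `X`,
contradicting `ôrad ≥ 3`.
-/

open Set SimpleGraph

lemma exists_forall_le_ciInf_ciSup {ι α : Type*} [Finite ι] [Nonempty ι]
    [ConditionallyCompleteLinearOrder α] (f : ι → ι → α) :
    ∃ i, ∀ j, f i j ≤ ⨅ i, ⨆ j, f i j := by
  obtain ⟨i, hi⟩ := exists_eq_ciInf_of_finite (f := fun i => ⨆ j, f i j)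
  exact ⟨i, fun j => hi ▸ le_ciSup (Finite.bddAbove_range _) j⟩

lemma exists_ciInf_ciSup_le {ι α : Type*} [Finite ι] [ConditionallyCompleteLinearOrder α]
    (f : ι → ι → α) (i : ι) : ∃ j, ⨅ i, ⨆ j, f i j ≤ f i j := by
  have : Nonempty ι := ⟨i⟩
  obtain ⟨j, hj⟩ := exists_eq_ciSup_of_finite (f := f i)
  exact ⟨j, hj ▸ ciInf_le (Finite.bddBelow_range _) i⟩

lemma IsPreconnected.subset_left_of_subset_union_of_isClosed {α : Type*} [TopologicalSpace α]
    {s u v : Set α} (hs : IsPreconnected s) (hu : IsClosed u) (hv : IsClosed v)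
    (huv : Disjoint u v) (hsuv : s ⊆ u ∪ v) (hsu : (s ∩ u).Nonempty) : s ⊆ u := by
  rcases isPreconnected_iff_subset_of_disjoint_closed.1 hs u v hu hv hsuv
    (by rw [huv.inter_eq, inter_empty]) with h | h
  · exact h
  · obtain ⟨x, hxs, hxu⟩ := hsu
    exact (huv.notMem_of_mem_left hxu (h hxs)).elim

lemma IsPreconnected.subset_of_finite_closed_cover {α : Type*} [TopologicalSpace α]
    {P X m : Set α} {F : Set (Set α)} (hF : F.Finite) (hFc : ∀ B ∈ F, IsClosed B)
    (hcov : ∀ z ∈ P, ∃ B ∈ F, z ∈ B) (hX : IsClosed X)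
    (hFX : ∀ B ∈ F, (B ∩ X).Nonempty → B = X)
    (hm : IsPreconnected m) (hmP : m ⊆ P) (hmX : (m ∩ X).Nonempty) : m ⊆ X := by
  refine hm.subset_left_of_subset_union_of_isClosed (v := ⋃ B ∈ F \ {X}, B) hX
    ((hF.subset sdiff_subset).isClosed_biUnion fun B hB => hFc B hB.1) ?_ ?_ hmX
  · refine disjoint_iUnion₂_right.2 fun B hB => disjoint_iff_inter_eq_empty.2 ?_
    rw [inter_comm, ← not_nonempty_iff_eq_empty]
    exact fun hBX => hB.2 (hFX B hB.1 hBX)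
  · intro z hz
    obtain ⟨B, hBF, hzB⟩ := hcov z (hmP hz)
    by_cases hBX : B = X
    · exact Or.inl (hBX ▸ hzB)
    · exact Or.inr (mem_biUnion ⟨hBF, hBX⟩ hzB)

lemma oRadTheta_eq_ciInf_ciSup (H V : Set (Set (ℝ × ℝ))) :
    oRadTheta H V = ⨅ i, ⨆ j, oDist H V i j :=
  rfl

namespace SimpleGraph

lemma Walk.mem_of_forall_adj_mem {α : Type*} {G : SimpleGraph α} {S : Set α}
    (hS : ∀ ⦃u w⦄, u ∈ S → G.Adj u w → w ∈ S) {u w : α} (W : G.Walk u w) (hu : u ∈ S) :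
    w ∈ S := by
  induction W with
  | nil => exact hu
  | cons h _ ih => exact ih (hS hu h)

lemma Connected.dist_ne_of_adj {α : Type*} {G : SimpleGraph α} (hG : G.Connected)
    (c : G.Coloring Bool) (i : α) {u w : α} (h : G.Adj u w) : G.dist i u ≠ G.dist i w := by
  intro heq
  obtain ⟨Wu, hWu⟩ := hG.exists_walk_length_eq_dist i u
  obtain ⟨Ww, hWw⟩ := hG.exists_walk_length_eq_dist i w
  have hu := c.even_length_iff_congr Wu
  rw [hWu, heq, ← hWw, c.even_length_iff_congr Ww] at hu
  exact c.valid h (Bool.eq_iff_iff.2 (by tauto))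

end SimpleGraph

lemma IsBox.convex {B : Set (ℝ × ℝ)} (hB : IsBox B) : Convex ℝ B := by
  obtain ⟨a, b, c, d, -, -, rfl⟩ := hB
  exact (convex_Icc a b).prod (convex_Icc c d)

lemma IsBox.isClosed {B : Set (ℝ × ℝ)} (hB : IsBox B) : IsClosed B := by
  obtain ⟨a, b, c, d, -, -, rfl⟩ := hB
  exact isClosed_Icc.prod isClosed_Icc

lemma IsBox.nonempty {B : Set (ℝ × ℝ)} (hB : IsBox B) : B.Nonempty := by
  obtain ⟨a, b, c, d, hab, hcd, rfl⟩ := hB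
  exact (nonempty_Icc.2 hab.le).prod (nonempty_Icc.2 hcd.le)

lemma IsBox.eq_fst_image_prod_snd_image {B : Set (ℝ × ℝ)} (hB : IsBox B) :
    B = (Prod.fst '' B) ×ˢ (Prod.snd '' B) := by
  obtain ⟨a, b, c, d, hab, hcd, rfl⟩ := hB
  rw [fst_image_prod _ (nonempty_Icc.2 hcd.le), snd_image_prod (nonempty_Icc.2 hab.le)]

section RectPath

variable {P : Set (ℝ × ℝ)} {p p' q : ℝ × ℝ} {k : ℕ} {f : ℕ → ℝ × ℝ}

lemma IsRectPath.rld_le (hf : IsRectPath P p q k f) : rld P p q ≤ k :=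
  Nat.sInf_le ⟨f, hf⟩

lemma isRectPath_one (hs : segment ℝ p q ⊆ P) (ha : AxisParallel p q) :
    IsRectPath P p q 1 fun | 0 => p | _ => q := by
  refine ⟨le_rfl, rfl, rfl, fun t ht => ?_⟩
  obtain rfl := Nat.lt_one_iff.1 ht
  exact ⟨hs, ha⟩

lemma IsRectPath.cons (hf : IsRectPath P p' q k f) (hs : segment ℝ p p' ⊆ P)
    (ha : AxisParallel p p') :
    IsRectPath P p q (k + 1) fun | 0 => p | t + 1 => f t := by
  obtain ⟨-, hf0, hfk, hseg⟩ := hf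
  refine ⟨by omega, rfl, hfk, fun t ht => ?_⟩
  cases t with
  | zero => simpa [hf0] using ⟨hs, ha⟩
  | succ t => exact hseg t (by omega)

lemma rldRad_le_of_forall_rld_le {n : ℕ} (hp : p ∈ P) (h : ∀ q ∈ P, rld P p q ≤ n) :
    rldRad P ≤ n := by
  unfold rldRad
  refine csInf_le_of_le (OrderBot.bddBelow _) ⟨p, hp, rfl⟩ (csSup_le ⟨_, p, hp, rfl⟩ ?_)
  rintro _ ⟨q, hq, rfl⟩
  exact h q hq

end RectPath

def HasGenericPoints (H V : Set (Set (ℝ × ℝ))) : Prop :=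
  ∀ h ∈ H, ∀ v ∈ V, (h ∩ v).Nonempty → ∃ x ∈ h ∩ v, ∀ B ∈ H ∪ V, x ∈ B → B = h ∨ B = v

namespace GoodDecomp

variable {P : Set (ℝ × ℝ)} {H V : Set (Set (ℝ × ℝ))} (hgood : GoodDecomp P H V)
include hgood

lemma finite_vertices : Finite {B : Set (ℝ × ℝ) // B ∈ H ∪ V} :=
  (hgood.finH.union hgood.finV).to_subtype

lemma exists_mem_H {z : ℝ × ℝ} (hz : z ∈ P) : ∃ h ∈ H, z ∈ h := by
  obtain ⟨h, hh, hzh⟩ := hgood.covH z z rfl (by simpa using hz)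
  exact ⟨h, hh, by simpa using hzh⟩

lemma exists_mem_V {z : ℝ × ℝ} (hz : z ∈ P) : ∃ v ∈ V, z ∈ v := by
  obtain ⟨v, hv, hzv⟩ := hgood.covV z z rfl (by simpa using hz)
  exact ⟨v, hv, by simpa using hzv⟩

lemma segment_subset {B : Set (ℝ × ℝ)} (hB : B ∈ H ∪ V) {p q : ℝ × ℝ} (hp : p ∈ B)
    (hq : q ∈ B) : segment ℝ p q ⊆ P :=
  ((hgood.box B hB).convex.segment_subset hp hq).trans (hgood.sub B hB)

lemma rld_le_two {B : Set (ℝ × ℝ)} (hB : B ∈ H ∪ V) {p q : ℝ × ℝ} (hp : p ∈ B)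
    (hq : q ∈ B) : rld P p q ≤ 2 := by
  have hr : (q.1, p.2) ∈ B := by
    rw [(hgood.box B hB).eq_fst_image_prod_snd_image]
    exact ⟨⟨q, hq, rfl⟩, ⟨p, hp, rfl⟩⟩
  exact ((isRectPath_one (hgood.segment_subset hB hr hq) (Or.inr rfl)).cons
    (hgood.segment_subset hB hp hr) (Or.inl rfl)).rld_le

lemma exists_corner {u m : {B : Set (ℝ × ℝ) // B ∈ H ∪ V}} (hadj : (thetaGraph H V).Adj u m)
    {p q : ℝ × ℝ} (hp : p ∈ u.1) (hq : q ∈ m.1) :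
    ∃ r ∈ u.1 ∩ m.1, AxisParallel p r ∧ AxisParallel r q := by
  obtain ⟨-, hHV | hVH, hne⟩ := hadj
  · refine ⟨(q.1, p.2), ?_, Or.inl rfl, Or.inr rfl⟩
    rw [hgood.cross _ hHV.1 _ hHV.2 hne]
    exact ⟨⟨q, hq, rfl⟩, ⟨p, hp, rfl⟩⟩
  · refine ⟨(p.1, q.2), ?_, Or.inr rfl, Or.inl rfl⟩
    rw [inter_comm, hgood.cross _ hVH.2 _ hVH.1 (by rwa [inter_comm])]
    exact ⟨⟨p, hp, rfl⟩, ⟨q, hq, rfl⟩⟩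

lemma exists_isRectPath_of_walk {u w : {B : Set (ℝ × ℝ) // B ∈ H ∪ V}}
    (W : (thetaGraph H V).Walk u w) (hW : W.length ≠ 0) {p q : ℝ × ℝ} (hp : p ∈ u.1)
    (hq : q ∈ w.1) : ∃ f, IsRectPath P p q (W.length + 1) f := by
  induction W generalizing p with
  | nil => exact (hW rfl).elim
  | @cons u m w hadj W ih =>
    rw [Walk.length_cons]
    by_cases hW' : W.length = 0
    · obtain rfl := Walk.eq_of_length_eq_zero hW'
      obtain ⟨r, hr, hpr, hrq⟩ := hgood.exists_corner hadj hp hq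
      rw [hW']
      exact ⟨_, (isRectPath_one (hgood.segment_subset m.2 hr.2 hq) hrq).cons
        (hgood.segment_subset u.2 hp hr.1) hpr⟩
    · obtain ⟨q', hq'⟩ := (hgood.box m.1 m.2).nonempty
      obtain ⟨r, hr, hpr, -⟩ := hgood.exists_corner hadj hp hq'
      obtain ⟨f, hf⟩ := ih hW' hr.2 hq
      exact ⟨_, hf.cons (hgood.segment_subset u.2 hp hr.1) hpr⟩

lemma rld_le_of_walk {u w : {B : Set (ℝ × ℝ) // B ∈ H ∪ V}} (W : (thetaGraph H V).Walk u w)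
    {p q : ℝ × ℝ} (hp : p ∈ u.1) (hq : q ∈ w.1) : rld P p q ≤ max (W.length + 1) 2 := by
  by_cases hW : W.length = 0
  · obtain rfl := Walk.eq_of_length_eq_zero hW
    exact (hgood.rld_le_two u.2 hp hq).trans (le_max_right _ _)
  · obtain ⟨f, hf⟩ := hgood.exists_isRectPath_of_walk W hW hp hq
    exact hf.rld_le.trans (le_max_left _ _)

lemma eq_of_mem_inter_of_mem_inter {X Y : Set (ℝ × ℝ)} (hX : X ∈ H ∩ V) (hY : Y ∈ H ∩ V)
    (hXY : (X ∩ Y).Nonempty) : X = Y := by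
  have hXY' := hgood.cross X hX.1 Y hY.2 hXY
  have hYX := hgood.cross Y hY.1 X hX.2 (by rwa [inter_comm])
  rw [inter_comm, hYX] at hXY'
  obtain ⟨hfst, hsnd⟩ := (prod_eq_prod_iff_of_nonempty (hYX ▸ by rwa [inter_comm])).1 hXY'
  rw [(hgood.box X (Or.inl hX.1)).eq_fst_image_prod_snd_image,
    (hgood.box Y (Or.inl hY.1)).eq_fst_image_prod_snd_image, hfst, hsnd]

/-- Both crossings with `X` pass through `X`, so the crossing `h ∩ v` lies inside `X` and a
generic point of it forces `X ∈ {h, v}`. -/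
lemma not_adj_both_sides (hgen : HasGenericPoints H V) {X h v : Set (ℝ × ℝ)}
    (hX : X ∈ H ∩ V) (hh : h ∈ H \ V) (hv : v ∈ V \ H) (hhX : (h ∩ X).Nonempty)
    (hXv : (X ∩ v).Nonempty) : False := by
  have hcrh := hgood.cross h hh.1 X hX.2 hhX
  have hcrv := hgood.cross X hX.1 v hv.1 hXv
  obtain ⟨z, hzh, hzX⟩ := hhX
  have hsub : h ∩ v ⊆ X := fun g hg => by
    have hg1 : (g.1, z.2) ∈ X ∩ v := by rw [hcrv]; exact ⟨⟨g, hg.2, rfl⟩, ⟨z, hzX, rfl⟩⟩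
    have hg : g ∈ h ∩ X := by rw [hcrh]; exact ⟨⟨_, hg1.1, rfl⟩, ⟨g, hg.1, rfl⟩⟩
    exact hg.2
  obtain ⟨w, hwX, hwv⟩ := hXv
  have hwz : (w.1, z.2) ∈ h ∩ v := by
    have h1 : (w.1, z.2) ∈ h ∩ X := by rw [hcrh]; exact ⟨⟨w, hwX, rfl⟩, ⟨z, hzh, rfl⟩⟩
    have h2 : (w.1, z.2) ∈ X ∩ v := by rw [hcrv]; exact ⟨⟨w, hwv, rfl⟩, ⟨z, hzX, rfl⟩⟩
    exact ⟨h1.1, h2.2⟩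
  obtain ⟨g, hg, hgonly⟩ := hgen h hh.1 v hv.1 ⟨_, hwz⟩
  rcases hgonly X (Or.inl hX.1) (hsub hg) with rfl | rfl
  · exact hh.2 hX.2
  · exact hv.2 hX.1

lemma subset_of_adj_of_mem_inter (hgen : HasGenericPoints H V)
    {X m : {B : Set (ℝ × ℝ) // B ∈ H ∪ V}} (hX : X.1 ∈ H ∩ V) (hadj : (thetaGraph H V).Adj X m) :
    m.1 ⊆ X.1 := by
  obtain ⟨hXm, -, hne⟩ := hadj
  have hmX : m.1 ≠ X.1 := fun h => hXm (Subtype.ext h).symm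
  have hmX' : (m.1 ∩ X.1).Nonempty := by rwa [inter_comm]
  have hXbox := hgood.box X.1 X.2
  have hmbox := hgood.box m.1 m.2
  rcases m.2 with hmH | hmV
  · by_cases hmV : m.1 ∈ V
    · exact (hmX (hgood.eq_of_mem_inter_of_mem_inter ⟨hmH, hmV⟩ hX hmX')).elim
    refine hmbox.convex.isPreconnected.subset_of_finite_closed_cover hgood.finV
      (fun B hB => (hgood.box B (Or.inr hB)).isClosed) (fun z hz => hgood.exists_mem_V hz)
      hXbox.isClosed (fun v hv hvX => ?_) (hgood.sub m.1 m.2) hmX'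
    by_cases hvH : v ∈ H
    · exact hgood.eq_of_mem_inter_of_mem_inter ⟨hvH, hv⟩ hX hvX
    · exact (hgood.not_adj_both_sides hgen hX ⟨hmH, hmV⟩ ⟨hv, hvH⟩ hmX'
        (by rwa [inter_comm])).elim
  · by_cases hmH : m.1 ∈ H
    · exact (hmX (hgood.eq_of_mem_inter_of_mem_inter ⟨hmH, hmV⟩ hX hmX')).elim
    refine hmbox.convex.isPreconnected.subset_of_finite_closed_cover hgood.finH
      (fun B hB => (hgood.box B (Or.inl hB)).isClosed) (fun z hz => hgood.exists_mem_H hz)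
      hXbox.isClosed (fun h hh hhX => ?_) (hgood.sub m.1 m.2) hmX'
    by_cases hhV : h ∈ V
    · exact hgood.eq_of_mem_inter_of_mem_inter ⟨hh, hhV⟩ hX hhX
    · exact (hgood.not_adj_both_sides hgen hX ⟨hh, hhV⟩ ⟨hmV, hmH⟩ hhX
        (by rwa [inter_comm])).elim

lemma disjoint_of_forall_exists_two_le_dist (hgen : HasGenericPoints H V)
    (hfar : ∀ i, ∃ j, 2 ≤ (thetaGraph H V).dist i j) : Disjoint H V := by
  refine disjoint_left.2 fun X hXH hXV => ?_
  let x : {B : Set (ℝ × ℝ) // B ∈ H ∪ V} := ⟨X, Or.inl hXH⟩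
  have hclosed : ∀ ⦃u w⦄, u ∈ {w | w = x ∨ (thetaGraph H V).Adj x w} →
      (thetaGraph H V).Adj u w → w ∈ {w | w = x ∨ (thetaGraph H V).Adj x w} := by
    rintro u w (rfl | hxu) huw
    · exact Or.inr huw
    by_cases hwx : w = x
    · exact Or.inl hwx
    obtain ⟨-, -, z, hzu, hzw⟩ := huw
    refine Or.inr ⟨Ne.symm hwx, ?_, z, hgood.subset_of_adj_of_mem_inter hgen ⟨hXH, hXV⟩ hxu hzu,
      hzw⟩
    rcases w.2 with hwH | hwV
    · exact Or.inr ⟨hXV, hwH⟩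
    · exact Or.inl ⟨hXH, hwV⟩
  obtain ⟨j, hj⟩ := hfar x
  obtain ⟨W⟩ := hgood.conn.preconnected x j
  rcases W.mem_of_forall_adj_mem hclosed (Or.inl rfl) with rfl | hxj
  · simp at hj
  · rw [dist_eq_one_iff_adj.2 hxj] at hj
    omega

open Classical in
noncomputable def sideColoring (hdisj : Disjoint H V) : (thetaGraph H V).Coloring Bool :=
  Coloring.mk (fun u => decide (u.1 ∈ V)) fun {u w} ⟨_, hside, _⟩ => by
    rcases hside with ⟨hu, hw⟩ | ⟨hu, hw⟩
    · simp [Set.disjoint_left.1 hdisj hu, hw]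
    · simp [hu, Set.disjoint_left.1 hdisj hw]

lemma exists_mem_mem_dist_lt (hdisj : Disjoint H V) (i : {B : Set (ℝ × ℝ) // B ∈ H ∪ V})
    {q : ℝ × ℝ} (hq : q ∈ P) :
    ∃ B B' : {B : Set (ℝ × ℝ) // B ∈ H ∪ V},
      q ∈ B.1 ∧ q ∈ B'.1 ∧ (thetaGraph H V).dist i B < (thetaGraph H V).dist i B' := by
  obtain ⟨h, hh, hqh⟩ := hgood.exists_mem_H hq
  obtain ⟨v, hv, hqv⟩ := hgood.exists_mem_V hq
  have hadj : (thetaGraph H V).Adj ⟨h, Or.inl hh⟩ ⟨v, Or.inr hv⟩ :=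
    ⟨fun e => Set.disjoint_left.1 hdisj hh (by rwa [Subtype.mk.inj e]), Or.inl ⟨hh, hv⟩,
      q, hqh, hqv⟩
  rcases (hgood.conn.dist_ne_of_adj (sideColoring hdisj) i hadj).lt_or_gt with hlt | hlt
  · exact ⟨_, _, hqh, hqv, hlt⟩
  · exact ⟨_, _, hqv, hqh, hlt⟩

end GoodDecomp

/-- Under the generic-points property, if `ôrad ≥ 3` then there is a point `p ∈ P` with
`rld(p,q) ≤ ôrad − 1` for every `q ∈ P`; consequently `rad(P) ≤ ôrad − 1`. -/
theorem rldRad_le_oRad_sub_one (P : Set (ℝ × ℝ)) (H V : Set (Set (ℝ × ℝ)))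
    (hgood : GoodDecomp P H V)
    (hgen : ∀ h ∈ H, ∀ v ∈ V, (h ∩ v).Nonempty →
      ∃ x ∈ h ∩ v, ∀ B ∈ H ∪ V, x ∈ B → B = h ∨ B = v)
    (hR : 3 ≤ oRadTheta H V) :
    (∃ p ∈ P, ∀ q ∈ P, rld P p q ≤ oRadTheta H V - 1) ∧
      rldRad P ≤ oRadTheta H V - 1 := by
  have := hgood.finite_vertices
  have := hgood.conn.nonempty
  obtain ⟨i₀, hi₀⟩ := exists_forall_le_ciInf_ciSup (oDist H V)
  have hdisj : Disjoint H V := hgood.disjoint_of_forall_exists_two_le_dist hgen fun i => by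
    obtain ⟨j, hj⟩ := exists_ciInf_ciSup_le (oDist H V) i
    exact ⟨j, by rw [oDist, ← oRadTheta_eq_ciInf_ciSup] at hj; omega⟩
  obtain ⟨p₀, hp₀⟩ := (hgood.box i₀.1 i₀.2).nonempty
  have hrld : ∀ q ∈ P, rld P p₀ q ≤ oRadTheta H V - 1 := fun q hq => by
    obtain ⟨B, B', hqB, -, hBB'⟩ := hgood.exists_mem_mem_dist_lt hdisj i₀ hq
    obtain ⟨W, hW⟩ := hgood.conn.exists_walk_length_eq_dist i₀ B
    have hB' := hi₀ B'
    rw [oDist, ← oRadTheta_eq_ciInf_ciSup] at hB'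
    have := hgood.rld_le_of_walk W hp₀ hqB
    omega
  exact ⟨⟨p₀, hgood.sub _ i₀.2 hp₀, hrld⟩,
    rldRad_le_of_forall_rld_le (hgood.sub _ i₀.2 hp₀) hrld⟩
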